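/- If X is a regular space with a dense subset E of cardinality at most 2^ω, and Bob has a winning strategy in the long tightness game G_1^{ω₁}(Ω_p, Ω_p) for some point p ∈ X, then the character of p in X is at most 2^ω (p has a neighbourhood base of cardinality at most 2^ω). -/

import Mathlib

universe u v

open Topology

/-- A strategy for Bob in the tightness game `G_1^κ(Ω_p, Ω_p)`: at inning `ξ < κ`, given the
history of Alice's previous moves and Alice's current set `A` (with `p ∈ closure A`),
Bob picks a point of `A`. -/
structure BobStratOne (X : Type u) [TopologicalSpace X] (p : X) (κ : Ordinal.{v}) where
  move : ∀ ξ : Ordinal.{v}, ξ < κ → (∀ α : Ordinal.{v}, α < ξ → Set X) → Set X → X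
  mem : ∀ ξ hξ hist A, p ∈ closure A → move ξ hξ hist A ∈ A

/-- The strategy is winning: for every play by Alice of sets having `p` in their closure,
the set of Bob's chosen points has `p` in its closure. -/
def BobStratOne.Winning {X : Type u} [TopologicalSpace X] {p : X} {κ : Ordinal.{v}}
    (S : BobStratOne X p κ) : Prop :=
  ∀ f : ∀ ξ : Ordinal.{v}, ξ < κ → Set X, (∀ ξ hξ, p ∈ closure (f ξ hξ)) →
    p ∈ closure {x | ∃ (ξ : Ordinal.{v}) (hξ : ξ < κ),
      S.move ξ hξ (fun α hα => f α (hα.trans hξ)) (f ξ hξ) = x}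

/-!
Let `R` be the set of Bob's possible answers after a given history of Alice's moves. Bob must
answer inside any set Alice may play, so `R ∈ 𝓝 p`. If for a closed neighbourhood `C` of `p` no
`R` met `E` only inside `interior C`, Alice could play for `ω₁` innings sets eliciting answers in
`E \ interior C`, and Bob would lose. Hence the sets `interior R` form a base at `p`, and it is
enough to take the histories in which Alice's moves are chosen canonically from Bob's earlier
answers in `E`: there are at most `ℵ₁ · |E| ^ ℵ₀ ≤ 𝔠` of these.
-/

open Set Cardinal

theorem exists_Iio_seq_of_forall_exists {ι X : Type*} [Preorder ι] [WellFoundedLT ι]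
    {κ : ι} {P : ∀ α, α < κ → (Iio α → X) → X → Prop}
    (h : ∀ α hα t, ∃ x, P α hα t x) :
    ∃ t : Iio κ → X, ∀ α hα, P α hα (fun β => t ⟨β, β.2.trans hα⟩) (t ⟨α, hα⟩) := by
  let g : ∀ α, α < κ → X := wellFounded_lt.fix fun α IH hα =>
    (h α hα fun β => IH β β.2 (β.2.trans hα)).choose
  refine ⟨fun β => g β β.2, fun α hα => ?_⟩
  have hg : g α hα = (h α hα fun β => g β (β.2.trans hα)).choose := by
    simp only [g]
    rw [WellFounded.fix_eq]
  show P α hα (fun β => g β _) (g α hα)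
  rw [hg]
  exact Exists.choose_spec _

theorem Cardinal.mk_sigma_Iio_aleph_one_arrow_le_continuum {Y : Type u} (hY : #Y ≤ 𝔠) :
    #(Σ α : Iio (aleph.{u} 1).ord, Iio α.1 → Y) ≤ 𝔠 := by
  have hcountable (α : Iio (aleph.{u} 1).ord) : #(Iio α.1) ≤ ℵ₀ := by
    rw [mk_Iio_ordinal, ← lift_aleph0.{u + 1, u}, lift_le, ← lt_aleph_one_iff, ← lt_ord]
    exact α.2
  calc #(Σ α : Iio (aleph.{u} 1).ord, Iio α.1 → Y)
      = sum fun α : Iio (aleph.{u} 1).ord => #(Iio α.1 → Y) := mk_sigma _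
    _ ≤ sum fun _ : Iio (aleph.{u} 1).ord => 𝔠 ^ ℵ₀ := sum_le_sum _ _ fun α => by
        rw [mk_arrow, ← lift_continuum.{u + 1, u}]
        exact (power_le_power_right (lift_le.2 hY)).trans
          (power_le_power_left (by simpa using continuum_ne_zero) (by simpa using hcountable α))
    _ = #(Iio (aleph.{u} 1).ord) * 𝔠 := by rw [sum_const', continuum_power_aleph0]
    _ ≤ 𝔠 * 𝔠 := by
        gcongr
        rw [mk_Iio_ordinal, card_ord, ← lift_continuum.{u + 1, u}, lift_le]
        exact aleph_one_le_continuum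
    _ = 𝔠 := mul_eq_self aleph0_le_continuum

namespace BobStratOne

variable {X : Type u} [TopologicalSpace X] {p : X} {κ : Ordinal.{v}} (S : BobStratOne X p κ)

def replies (ξ : Ordinal.{v}) (hξ : ξ < κ) (h : ∀ β, β < ξ → Set X) : Set X :=
  {x | ∃ A, p ∈ closure A ∧ S.move ξ hξ h A = x}

theorem replies_mem_nhds (ξ : Ordinal.{v}) (hξ : ξ < κ) (h : ∀ β, β < ξ → Set X) :
    S.replies ξ hξ h ∈ 𝓝 p := by
  rw [← mem_interior_iff_mem_nhds, interior_eq_compl_closure_compl]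
  exact fun hp => S.mem ξ hξ h _ hp ⟨_, hp, rfl⟩

open Classical in
noncomputable def elicitingMove (ξ : Ordinal.{v}) (hξ : ξ < κ) (h : ∀ β, β < ξ → Set X)
    (x : X) : Set X :=
  if hx : x ∈ S.replies ξ hξ h then hx.choose else univ

theorem mem_closure_elicitingMove (ξ : Ordinal.{v}) (hξ : ξ < κ) (h : ∀ β, β < ξ → Set X)
    (x : X) : p ∈ closure (S.elicitingMove ξ hξ h x) := by
  unfold elicitingMove
  split_ifs with hx
  exacts [hx.choose_spec.1, by simp]

theorem move_elicitingMove {ξ : Ordinal.{v}} {hξ : ξ < κ} {h : ∀ β, β < ξ → Set X} {x : X}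
    (hx : x ∈ S.replies ξ hξ h) : S.move ξ hξ h (S.elicitingMove ξ hξ h x) = x := by
  rw [elicitingMove, dif_pos hx]
  exact hx.choose_spec.2

/-- Alice's moves before inning `α` when at each inning `β` she plays a set eliciting the answer
`t β` from Bob. -/
noncomputable def replay (α : Ordinal.{v}) (hα : α ≤ κ) (t : Iio α → X) :
    ∀ β, β < α → Set X := fun β hβ =>
  S.elicitingMove β (hβ.trans_le hα)
    (replay β (hβ.le.trans hα) fun γ => t ⟨γ, γ.2.trans hβ⟩) (t ⟨β, hβ⟩)
termination_by α

theorem replay_restrict {α ξ : Ordinal.{v}} (hα : α ≤ κ) (hξ : ξ ≤ α) (t : Iio α → X) :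
    (fun γ hγ => S.replay α hα t γ (hγ.trans_le hξ)) =
      S.replay ξ (hξ.trans hα) fun γ => t ⟨γ, γ.2.trans_le hξ⟩ := by
  funext γ hγ
  rw [replay, replay]

theorem Winning.exists_replies_inter_subset {S : BobStratOne X p κ} (hS : S.Winning)
    (E : Set X) {V : Set X} (hV : IsOpen V) (hpV : p ∈ V) :
    ∃ α hα, ∃ t : Iio α → E, S.replies α hα (S.replay α hα.le fun β => t β) ∩ E ⊆ V := by
  by_contra! h
  obtain ⟨t, ht⟩ := exists_Iio_seq_of_forall_exists (κ := κ) (X := E)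
    (P := fun α hα t x =>
      (x : X) ∈ S.replies α hα (S.replay α hα.le fun β => t β) ∧ (x : X) ∉ V)
    fun α hα t => by
      obtain ⟨x, ⟨hxR, hxE⟩, hxV⟩ := not_subset.1 (h α hα t)
      exact ⟨⟨x, hxE⟩, hxR, hxV⟩
  have hmoves : {x | ∃ ξ hξ, S.move ξ hξ
      (fun α hα => S.replay κ le_rfl (fun β => t β) α (hα.trans hξ))
      (S.replay κ le_rfl (fun β => t β) ξ hξ) = x} ⊆ Vᶜ := by
    rintro _ ⟨ξ, hξ, rfl⟩
    rw [S.replay_restrict le_rfl hξ.le, replay, move_elicitingMove _ (ht ξ hξ).1]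
    exact (ht ξ hξ).2
  exact closure_minimal hmoves hV.isClosed_compl
    (hS _ fun ξ hξ => by rw [replay]; exact S.mem_closure_elicitingMove _ _ _ _) hpV

end BobStratOne

/-- If `X` is regular with a dense subset `E` of cardinality at most `2^ω` and Bob has a
winning strategy in `G_1^{ω₁}(Ω_p, Ω_p)`, then the character of `p` in `X` is at most `2^ω`:
`p` has a neighbourhood base of cardinality at most `2^ω`. -/
theorem character_le_continuum {X : Type u} [TopologicalSpace X] [RegularSpace X] {p : X}
    (E : Set X) (hE : Dense E) (hEcard : Cardinal.mk E ≤ Cardinal.continuum.{u})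
    (S : BobStratOne.{u, u} X p (Cardinal.aleph 1).ord) (hS : S.Winning) :
    ∃ B : Set (Set X), Cardinal.mk B ≤ Cardinal.continuum.{u} ∧
      (∀ V ∈ B, V ∈ 𝓝 p) ∧ ∀ U ∈ 𝓝 p, ∃ V ∈ B, V ⊆ U := by
  let N : (Σ α : Iio (aleph.{u} 1).ord, Iio α.1 → E) → Set X := fun z =>
    interior (S.replies z.1 z.1.2 (S.replay z.1 z.1.2.le fun β => z.2 β))
  refine ⟨range N, ?_, ?_, fun U hU => ?_⟩
  · rw [← lift_le.{u + 1}, lift_continuum]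
    exact mk_range_le_lift.trans (by simpa using mk_sigma_Iio_aleph_one_arrow_le_continuum hEcard)
  · rintro _ ⟨z, rfl⟩
    exact interior_mem_nhds.2 (S.replies_mem_nhds _ _ _)
  · obtain ⟨C, ⟨hC, hCclosed⟩, hCU⟩ := (closed_nhds_basis p).mem_iff.1 hU
    obtain ⟨α, hα, t, ht⟩ :=
      hS.exists_replies_inter_subset E isOpen_interior (mem_interior_iff_mem_nhds.2 hC)
    refine ⟨N ⟨⟨α, hα⟩, t⟩, mem_range_self _, ?_⟩
    calc N ⟨⟨α, hα⟩, t⟩ ⊆ closure (S.replies α hα (S.replay α hα.le fun β => t β) ∩ E) :=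
          (hE.open_subset_closure_inter isOpen_interior).trans
            (closure_mono (inter_subset_inter_left _ interior_subset))
      _ ⊆ closure (interior C) := closure_mono ht
      _ ⊆ U := (closure_minimal interior_subset hCclosed).trans hCU
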